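/- Let h ∈ E and let w ∈ ℝ satisfy w > 0 and w ≥ w₀(h). Suppose that for every h̃ ∈ E and every w̃ > 0 with w̃ ≥ w₀(h̃) one has 1 + 3F(h)/w² ≤ 1 + 3F(h̃)/w̃². Then w = w₀(h). -/

import Mathlib

open Real MeasureTheory Set

/-- `h` belongs to the class `E` of functions of class `C^{1,1}` on `[0, π/2]`
(continuously differentiable with Lipschitz continuous derivative) satisfying
`h 0 = 0` and `h' (π/2) = 0`; the function `h'` is the derivative of `h` on `[0, π/2]`. -/
structure MemE (h h' : ℝ → ℝ) : Prop where
  hasDeriv : ∀ t ∈ Icc (0:ℝ) (π/2), HasDerivWithinAt h (h' t) (Icc (0:ℝ) (π/2)) t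
  lipschitz : ∃ K : NNReal, LipschitzOnWith K h' (Icc (0:ℝ) (π/2))
  h_zero : h 0 = 0
  h'_pi_div_two : h' (π/2) = 0

/-- `F(h) = ∫₀^{π/2} (h² − (1/2) h'²) cos t dt`. -/
noncomputable def Ffun (h h' : ℝ → ℝ) : ℝ :=
  ∫ t in (0:ℝ)..(π/2), (h t ^ 2 - (1/2) * h' t ^ 2) * Real.cos t

/-- `w₀(h) = ess sup_{t ∈ (0, π/2)} |h t + h'' t|`, where `h''` is the (a.e. defined)
second derivative of `h`. -/
noncomputable def w0 (h h'' : ℝ → ℝ) : ℝ :=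
  essSup (fun t => |h t + h'' t|) (volume.restrict (Ioo (0:ℝ) (π/2)))

/-!
If `F(h) < 0`, then `I = 1 + 3 F(h) / w²` is strictly increasing in `w`, so a minimizer takes the
least admissible width `w = w₀(h)`. And `F(h) < 0` at a minimizer because the competitor
`g t = cos 2t - 1`, with `w₀(g) ≤ 4` and `F(g) = -4/15`, already achieves `I < 1`.
-/

lemma w0_le_of_forall_mem_Ioo {h h'' : ℝ → ℝ} {C : ℝ}
    (hC : ∀ t ∈ Ioo (0:ℝ) (π/2), |h t + h'' t| ≤ C) : w0 h h'' ≤ C :=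
  haveI : (ae (volume.restrict (Ioo (0:ℝ) (π/2)))).NeBot := by
    rw [ae_neBot, Ne, Measure.restrict_eq_zero, Real.volume_Ioo]
    simp [pi_pos]
  essSup_le_of_ae_le C (ae_restrict_of_forall_mem measurableSet_Ioo hC)
    (Filter.isCoboundedUnder_le_of_le _ fun _ => abs_nonneg _)

lemma eq_of_forall_div_sq_le {F a w : ℝ} (hF : F < 0) (hw : 0 < w) (haw : a ≤ w)
    (hmin : ∀ w', 0 < w' → a ≤ w' → F / w ^ 2 ≤ F / w' ^ 2) : w = a := by
  by_contra hne
  set w' := max a (w / 2)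
  have hw' : 0 < w' := lt_max_of_lt_right (by linarith)
  have hw'w : w' < w := max_lt (lt_of_le_of_ne haw (Ne.symm hne)) (by linarith)
  have hsq : w' ^ 2 < w ^ 2 := by gcongr
  have := hmin w' hw' (le_max_left _ _)
  rw [div_le_div_iff₀ (by positivity) (by positivity)] at this
  nlinarith

noncomputable def cosTwoSubOne (t : ℝ) : ℝ := cos (2 * t) - 1
noncomputable def cosTwoSubOne' (t : ℝ) : ℝ := -2 * sin (2 * t)
noncomputable def cosTwoSubOne'' (t : ℝ) : ℝ := -4 * cos (2 * t)

lemma hasDerivAt_cosTwoSubOne (t : ℝ) : HasDerivAt cosTwoSubOne (cosTwoSubOne' t) t := by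
  refine (((hasDerivAt_id t).const_mul 2).cos.sub_const 1).congr_deriv ?_
  simp only [cosTwoSubOne', id]; ring

lemma hasDerivAt_cosTwoSubOne' (t : ℝ) : HasDerivAt cosTwoSubOne' (cosTwoSubOne'' t) t := by
  refine ((((hasDerivAt_id t).const_mul 2).sin).const_mul (-2)).congr_deriv ?_
  simp only [cosTwoSubOne'', id]; ring

lemma lipschitzWith_cosTwoSubOne' : LipschitzWith 4 cosTwoSubOne' := by
  refine lipschitzWith_of_nnnorm_deriv_le (fun t => (hasDerivAt_cosTwoSubOne' t).differentiableAt)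
    fun t => ?_
  rw [(hasDerivAt_cosTwoSubOne' t).deriv, ← NNReal.coe_le_coe, coe_nnnorm, cosTwoSubOne'',
    norm_mul, Real.norm_eq_abs, Real.norm_eq_abs]
  norm_num
  exact abs_cos_le_one _

lemma memE_cosTwoSubOne : MemE cosTwoSubOne cosTwoSubOne' where
  hasDeriv t _ := (hasDerivAt_cosTwoSubOne t).hasDerivWithinAt
  lipschitz := ⟨4, lipschitzWith_cosTwoSubOne'.lipschitzOnWith⟩
  h_zero := by simp [cosTwoSubOne]
  h'_pi_div_two := by simp [cosTwoSubOne', mul_div_cancel₀]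

lemma Ffun_cosTwoSubOne : Ffun cosTwoSubOne cosTwoSubOne' = -(4 / 15) := by
  have hanti (t : ℝ) : HasDerivAt (fun t => 12 / 5 * sin t ^ 5 - 8 / 3 * sin t ^ 3)
      ((cosTwoSubOne t ^ 2 - 1 / 2 * cosTwoSubOne' t ^ 2) * cos t) t := by
    refine ((((hasDerivAt_sin t).pow 5).const_mul (12 / 5 : ℝ)).sub
      (((hasDerivAt_sin t).pow 3).const_mul (8 / 3 : ℝ))).congr_deriv ?_
    simp only [cosTwoSubOne, cosTwoSubOne', cos_two_mul, sin_two_mul]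
    push_cast
    linear_combination (cos t * (12 * sin t ^ 2 + 4 - 4 * cos t ^ 2)) * sin_sq_add_cos_sq t
  rw [Ffun, intervalIntegral.integral_eq_sub_of_hasDerivAt (fun t _ => hanti t)
    (Continuous.intervalIntegrable (by unfold cosTwoSubOne cosTwoSubOne'; fun_prop) _ _)]
  norm_num

lemma w0_cosTwoSubOne_le : w0 cosTwoSubOne cosTwoSubOne'' ≤ 4 := by
  refine w0_le_of_forall_mem_Ioo fun t _ => ?_
  have hsum : cosTwoSubOne t + cosTwoSubOne'' t = -3 * cos (2 * t) - 1 := by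
    simp only [cosTwoSubOne, cosTwoSubOne'']; ring
  rw [hsum, abs_le]
  constructor <;> linarith [neg_one_le_cos (2 * t), cos_le_one (2 * t)]

theorem minimizer_has_w_eq_w0 (h h' h'' : ℝ → ℝ) (hE : MemE h h')
    (hsecond : ∀ᵐ t ∂(volume.restrict (Ioo (0:ℝ) (π/2))), HasDerivAt h' (h'' t) t)
    (w : ℝ) (hw : 0 < w) (hww0 : w0 h h'' ≤ w)
    (hmin : ∀ (g g' g'' : ℝ → ℝ) (w' : ℝ), MemE g g' →
      (∀ᵐ t ∂(volume.restrict (Ioo (0:ℝ) (π/2))), HasDerivAt g' (g'' t) t) →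
      0 < w' → w0 g g'' ≤ w' →
      1 + 3 * Ffun h h' / w ^ 2 ≤ 1 + 3 * Ffun g g' / w' ^ 2) :
    w = w0 h h'' := by
  have hF : Ffun h h' < 0 := by
    have hcomp := hmin _ _ _ 4 memE_cosTwoSubOne (ae_of_all _ hasDerivAt_cosTwoSubOne')
      four_pos w0_cosTwoSubOne_le
    rw [Ffun_cosTwoSubOne] at hcomp
    by_contra! hF
    have : 0 ≤ 3 * Ffun h h' / w ^ 2 := by positivity
    linarith
  refine eq_of_forall_div_sq_le hF hw hww0 fun w' hw' hw0 => ?_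
  have hcomp := hmin h h' h'' w' hE hsecond hw' hw0
  rw [mul_div_assoc, mul_div_assoc] at hcomp
  linarith
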